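/- arXiv:1211.3135 — 2 statements merged into one kernel-verified Lean document; each statement's English description precedes it below -/
import Mathlib

section
/- Cancellation property for multipliers of products: Let E, F, G be Banach ideal spaces with G having the Fatou property. Then M(E ⊙ F, E ⊙ G) ≡ M(F, G) isometrically. -/
open MeasureTheory

/-- A Banach ideal space on a measure space: a linear subspace of measurable
functions (mod null sets) with a complete lattice norm having the ideal property,
and a weak unit (saturation). -/
structure IdealSpace {α : Type*} [MeasurableSpace α] (μ : Measure α) where
  carrier : Set (α → ℝ)
  norm : (α → ℝ) → ℝ
  zero_mem : (0 : α → ℝ) ∈ carrier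
  add_mem : ∀ {f g : α → ℝ}, f ∈ carrier → g ∈ carrier → f + g ∈ carrier
  smul_mem : ∀ (c : ℝ) {f : α → ℝ}, f ∈ carrier → c • f ∈ carrier
  norm_nonneg : ∀ f, 0 ≤ norm f
  norm_eq_zero : ∀ f ∈ carrier, (norm f = 0 ↔ f =ᵐ[μ] 0)
  norm_add : ∀ f g, f ∈ carrier → g ∈ carrier → norm (f + g) ≤ norm f + norm g
  norm_smul : ∀ (c : ℝ) (f : α → ℝ), norm (c • f) = |c| * norm f
  ideal_mem : ∀ {f g : α → ℝ}, g ∈ carrier → (∀ᵐ a ∂μ, |f a| ≤ |g a|) → f ∈ carrier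
  ideal_norm : ∀ {f g : α → ℝ}, g ∈ carrier → (∀ᵐ a ∂μ, |f a| ≤ |g a|) → norm f ≤ norm g
  weak_unit : ∃ w ∈ carrier, ∀ᵐ a ∂μ, 0 < w a
  complete : ∀ x : ℕ → α → ℝ, (∀ n, x n ∈ carrier) →
    (∀ ε > 0, ∃ N, ∀ m ≥ N, ∀ n ≥ N, norm (x m - x n) < ε) →
    ∃ f ∈ carrier, Filter.Tendsto (fun n => norm (x n - f)) Filter.atTop (nhds 0)

variable {α : Type*} [MeasurableSpace α] {μ : Measure α}

/-- The pointwise product space E ⊙ F. -/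
def prodSet (E F : IdealSpace μ) : Set (α → ℝ) :=
  {z | ∃ x ∈ E.carrier, ∃ y ∈ F.carrier, z =ᵐ[μ] x * y}

/-- The quasi-norm of the pointwise product space E ⊙ F. -/
noncomputable def prodNorm (E F : IdealSpace μ) (z : α → ℝ) : ℝ :=
  sInf {r | ∃ x ∈ E.carrier, ∃ y ∈ F.carrier, z =ᵐ[μ] x * y ∧ r = E.norm x * F.norm y}

/-- The Fatou property. -/
def HasFatou (E : IdealSpace μ) : Prop :=
  ∀ (x : ℕ → α → ℝ) (f : α → ℝ), (∀ n, x n ∈ E.carrier) →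
    (∀ᵐ a ∂μ, ∀ n, 0 ≤ x n a ∧ x n a ≤ x (n + 1) a) →
    (∀ᵐ a ∂μ, Filter.Tendsto (fun n => x n a) Filter.atTop (nhds (f a))) →
    (∃ C, ∀ n, E.norm (x n) ≤ C) →
    f ∈ E.carrier ∧ Filter.Tendsto (fun n => E.norm (x n)) Filter.atTop (nhds (E.norm f))

/-- The space of pointwise multipliers M(S, T): membership. -/
def multSet (S T : Set (α → ℝ)) : Set (α → ℝ) :=
  {x | ∀ y ∈ S, x * y ∈ T}

/-- The operator norm of a pointwise multiplier from (S, NS) to (·, NT). -/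
noncomputable def multNorm (S : Set (α → ℝ)) (NS NT : (α → ℝ) → ℝ) (x : α → ℝ) : ℝ :=
  sSup {r | ∃ y ∈ S, NS y ≤ 1 ∧ r = NT (x * y)}

/-!
Multiplication by `x` acts on `E ⊙ F` as `e f ↦ e (x f)`, which gives `M(F, G) ⊆ M(E ⊙ F, E ⊙ G)`
contractively. Conversely, for `y ∈ F` the function `w = x y` multiplies `E` into `E ⊙ G` with
norm `c ≤ ‖x‖ ‖y‖`, and any such `w` lies in `G` with `‖w‖_G ≤ c`: starting from a weak unit `e₀`
of `E`, factor `|w| eₙ = eₙ₊₁ gₙ` with `‖eₙ₊₁‖ ≤ 1` and `‖gₙ‖ ≤ c + ε`, so that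
`|w| ^ n e₀ = eₙ g₀ ⋯ gₙ₋₁`. Riesz–Fischer bounds all `eₙ / n ^ 2` by one element of `E`, and AM-GM
then shows that the averages of `g₀, …, gₙ₋₁`, of norm `≤ c + ε`, eventually exceed any `t < |w|`;
the Fatou property of `G` concludes. Since a norm bound alone says nothing about membership, `y` is
first cut off where `|x y| > n v`, `v` a weak unit of `G`, which puts `x (e y)` in `E ⊙ G`; Fatou
removes the cutoff again. Finally, every multiplier `E ⊙ F → E ⊙ G` is bounded, by a gliding hump
built with Riesz–Fischer.
-/

open Filter Topology

namespace IdealSpace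

variable (E : IdealSpace μ)

theorem norm_zero : E.norm 0 = 0 := by
  simpa using E.norm_smul 0 0

theorem norm_neg (f : α → ℝ) : E.norm (-f) = E.norm f := by
  simpa using E.norm_smul (-1) f

theorem sub_mem {f g : α → ℝ} (hf : f ∈ E.carrier) (hg : g ∈ E.carrier) : f - g ∈ E.carrier := by
  simpa [sub_eq_add_neg] using E.add_mem hf (E.smul_mem (-1) hg)

theorem sum_mem {ι : Type*} (s : Finset ι) {f : ι → α → ℝ} (hf : ∀ i ∈ s, f i ∈ E.carrier) :
    ∑ i ∈ s, f i ∈ E.carrier :=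
  Finset.sum_induction f (· ∈ E.carrier) (fun _ _ => E.add_mem) E.zero_mem hf

theorem norm_sum_le {ι : Type*} (s : Finset ι) {f : ι → α → ℝ} (hf : ∀ i ∈ s, f i ∈ E.carrier) :
    E.norm (∑ i ∈ s, f i) ≤ ∑ i ∈ s, E.norm (f i) :=
  Finset.le_sum_of_subadditive_on_pred E.norm (· ∈ E.carrier) E.norm_zero.le E.norm_add
    (fun _ _ => E.add_mem) f hf

theorem mem_of_abs_le {f g : α → ℝ} (hg : g ∈ E.carrier) (h : |f| ≤ |g|) : f ∈ E.carrier :=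
  E.ideal_mem hg (Eventually.of_forall h)

theorem norm_le_of_abs_le {f g : α → ℝ} (hg : g ∈ E.carrier) (h : |f| ≤ |g|) :
    E.norm f ≤ E.norm g :=
  E.ideal_norm hg (Eventually.of_forall h)

theorem abs_mem {f : α → ℝ} (hf : f ∈ E.carrier) : |f| ∈ E.carrier :=
  E.mem_of_abs_le hf (abs_abs f).le

theorem norm_abs {f : α → ℝ} (hf : f ∈ E.carrier) : E.norm |f| = E.norm f :=
  (E.norm_le_of_abs_le hf (abs_abs f).le).antisymm
    (E.norm_le_of_abs_le (E.abs_mem hf) (abs_abs f).ge)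

theorem exists_norm_le_one_ae_pos : ∃ e ∈ E.carrier, 0 ≤ e ∧ E.norm e ≤ 1 ∧ ∀ᵐ a ∂μ, 0 < e a := by
  obtain ⟨w, hw, hw₀⟩ := E.weak_unit
  have hk : 0 < E.norm w + 1 := by linarith [E.norm_nonneg w]
  refine ⟨(E.norm w + 1)⁻¹ • |w|, E.smul_mem _ (E.abs_mem hw), fun a => ?_, ?_, ?_⟩
  · simp only [Pi.zero_apply, Pi.smul_apply, smul_eq_mul, Pi.abs_apply]
    positivity
  · rw [E.norm_smul, E.norm_abs hw, abs_of_pos (inv_pos.2 hk), inv_mul_le_one₀ hk]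
    linarith
  · filter_upwards [hw₀] with a ha
    simp only [Pi.smul_apply, smul_eq_mul, Pi.abs_apply]
    exact mul_pos (inv_pos.2 hk) (abs_pos.2 ha.ne')

theorem norm_inv_smul_sum_le {g : ℕ → α → ℝ} {K : ℝ} (hK : 0 ≤ K)
    (hg : ∀ i, g i ∈ E.carrier) (hgK : ∀ i, E.norm (g i) ≤ K) (n : ℕ) :
    E.norm ((n : ℝ)⁻¹ • ∑ i ∈ Finset.range n, g i) ≤ K := by
  rw [E.norm_smul, abs_inv, Nat.abs_cast]
  calc (n : ℝ)⁻¹ * E.norm (∑ i ∈ Finset.range n, g i) ≤ (n : ℝ)⁻¹ * (n * K) := by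
        gcongr
        refine (E.norm_sum_le _ fun i _ => hg i).trans ?_
        simpa using Finset.sum_le_sum fun i (_ : i ∈ Finset.range n) => hgK i
    _ ≤ K := by
        rcases n.eq_zero_or_pos with rfl | hn
        · simpa using hK
        · rw [inv_mul_cancel_left₀ (by positivity)]

/-- The positive parts of `P n - S` are dominated by `|P m - S|` for `m ≥ n`, so they vanish. -/
theorem ae_le_of_monotone_of_tendsto {P : ℕ → α → ℝ} {S : α → ℝ} (hP : ∀ n, P n ∈ E.carrier)
    (hS : S ∈ E.carrier) (hmono : Monotone P)
    (hlim : Tendsto (fun n => E.norm (P n - S)) atTop (𝓝 0)) (n : ℕ) :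
    ∀ᵐ a ∂μ, P n a ≤ S a := by
  have hdom : ∀ m ≥ n, |(P n - S) ⊔ 0| ≤ |P m - S| := fun m hm a => by
    simp only [Pi.abs_apply, Pi.sup_apply, Pi.sub_apply, Pi.zero_apply]
    rw [abs_of_nonneg (le_max_right _ _)]
    exact max_le ((sub_le_sub_right (hmono hm a) _).trans (le_abs_self _)) (abs_nonneg _)
  have hmem : (P n - S) ⊔ 0 ∈ E.carrier := E.mem_of_abs_le (E.sub_mem (hP n) hS) (hdom n le_rfl)
  have hzero : E.norm ((P n - S) ⊔ 0) = 0 :=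
    le_antisymm (ge_of_tendsto hlim (eventually_atTop.2 ⟨n, fun m hm =>
      E.norm_le_of_abs_le (E.sub_mem (hP m) hS) (hdom m hm)⟩)) (E.norm_nonneg _)
  filter_upwards [(E.norm_eq_zero _ hmem).1 hzero] with a ha
  simpa [sub_nonpos] using ha

theorem norm_partialSum_sub_le {e : ℕ → α → ℝ} (he : ∀ n, e n ∈ E.carrier) (m n : ℕ) :
    E.norm (∑ k ∈ Finset.range m, e k - ∑ k ∈ Finset.range n, e k) ≤
      dist (∑ k ∈ Finset.range m, E.norm (e k)) (∑ k ∈ Finset.range n, E.norm (e k)) := by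
  wlog hnm : n ≤ m generalizing m n
  · rw [← neg_sub, E.norm_neg, dist_comm]
    exact this n m (le_of_not_ge hnm)
  rw [← Finset.sum_Ico_eq_sub _ hnm, Real.dist_eq, ← Finset.sum_Ico_eq_sub _ hnm]
  exact (E.norm_sum_le _ fun k _ => he k).trans (le_abs_self _)

/-- Riesz–Fischer: by completeness the series converges, and its sum dominates every term. -/
theorem exists_forall_le_of_summable {e : ℕ → α → ℝ} (he : ∀ n, e n ∈ E.carrier)
    (he₀ : ∀ n, 0 ≤ e n) (hsum : Summable fun n => E.norm (e n)) :
    ∃ S ∈ E.carrier, ∀ᵐ a ∂μ, ∀ n, e n a ≤ S a := by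
  set P : ℕ → α → ℝ := fun n => ∑ k ∈ Finset.range n, e k
  have hP : ∀ n, P n ∈ E.carrier := fun n => E.sum_mem _ fun k _ => he k
  have hmono : Monotone P := monotone_nat_of_le_succ fun n => by
    simpa [P, Finset.sum_range_succ] using he₀ n
  have hcauchy := Metric.cauchySeq_iff.1 hsum.hasSum.tendsto_sum_nat.cauchySeq
  obtain ⟨S, hS, hlim⟩ := E.complete P hP fun ε hε => by
    obtain ⟨N, hN⟩ := hcauchy ε hε
    exact ⟨N, fun m hm n hn => (E.norm_partialSum_sub_le he m n).trans_lt (hN m hm n hn)⟩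
  refine ⟨S, hS, ae_all_iff.2 fun n => ?_⟩
  filter_upwards [E.ae_le_of_monotone_of_tendsto hP hS hmono hlim (n + 1)] with a ha
  refine le_trans ?_ ha
  simpa [P] using Finset.single_le_sum (fun k _ => he₀ k a) (Finset.self_mem_range_succ n)

theorem exists_le_sq_mul {e : ℕ → α → ℝ} (he : ∀ n, e n ∈ E.carrier) (he₀ : ∀ n, 0 ≤ e n)
    (he₁ : ∀ n, E.norm (e n) ≤ 1) :
    ∃ S : α → ℝ, ∀ᵐ a ∂μ, 0 ≤ S a ∧ ∀ n, 1 ≤ n → e n a ≤ n ^ 2 * S a := by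
  obtain ⟨S, -, hS⟩ := E.exists_forall_le_of_summable (e := fun n => (1 / (n : ℝ) ^ 2) • e n)
    (fun n => E.smul_mem _ (he n)) (fun n a => by simpa using mul_nonneg (by positivity) (he₀ n a))
    (Summable.of_nonneg_of_le (fun n => E.norm_nonneg _) (fun n => by
      rw [E.norm_smul, abs_of_nonneg (by positivity)]
      exact mul_le_of_le_one_right (by positivity) (he₁ n))
      (Real.summable_one_div_nat_pow.2 one_lt_two))
  refine ⟨S, hS.mono fun a ha => ⟨by simpa using ha 0, fun n hn => ?_⟩⟩
  have := ha n
  rwa [Pi.smul_apply, smul_eq_mul, one_div, inv_mul_le_iff₀ (by positivity)] at this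

end IdealSpace

theorem tendsto_ciInf_add_of_tendsto {u : ℕ → ℝ} {s : ℝ} (hbdd : BddBelow (Set.range u))
    (hu : Tendsto u atTop (𝓝 s)) : Tendsto (fun n => ⨅ k, u (n + k)) atTop (𝓝 s) := by
  have hbdd' : ∀ n, BddBelow (Set.range fun k => u (n + k)) := fun n =>
    hbdd.mono (Set.range_comp_subset_range _ u)
  refine tendsto_order.2 ⟨fun t ht => ?_, fun t ht => (hu.eventually (gt_mem_nhds ht)).mono
    fun n hn => (ciInf_le (hbdd' n) 0).trans_lt (by simpa using hn)⟩
  obtain ⟨t', htt', ht's⟩ := exists_between ht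
  obtain ⟨N, hN⟩ := eventually_atTop.1 (hu.eventually (lt_mem_nhds ht's))
  filter_upwards [eventually_ge_atTop N] with n hn
  exact htt'.trans_le (le_ciInf fun k => (hN _ (hn.trans (Nat.le_add_right n k))).le)

/-- Fatou's lemma for non-monotone sequences, via the monotone sequence of tail infima. -/
theorem HasFatou.mem_and_norm_le_of_tendsto {G : IdealSpace μ} (hG : HasFatou G)
    {u : ℕ → α → ℝ} {s : α → ℝ} {C : ℝ} (hu : ∀ n, u n ∈ G.carrier) (hu₀ : ∀ n, 0 ≤ u n)
    (hlim : ∀ᵐ a ∂μ, Tendsto (fun n => u n a) atTop (𝓝 (s a))) (hC : ∀ n, G.norm (u n) ≤ C) :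
    s ∈ G.carrier ∧ G.norm s ≤ C := by
  set v : ℕ → α → ℝ := fun n a => ⨅ k, u (n + k) a
  have hbdd : ∀ a, BddBelow (Set.range fun n => u n a) :=
    fun a => ⟨0, by rintro _ ⟨n, rfl⟩; exact hu₀ n a⟩
  have hbdd' : ∀ n a, BddBelow (Set.range fun k => u (n + k) a) :=
    fun n a => ⟨0, by rintro _ ⟨k, rfl⟩; exact hu₀ _ a⟩
  have hv₀ : ∀ n, 0 ≤ v n := fun n a => le_ciInf fun k => hu₀ _ a
  have hvu : ∀ n, |v n| ≤ |u n| := fun n a => by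
    simp only [Pi.abs_apply, abs_of_nonneg (hv₀ n a), abs_of_nonneg (hu₀ n a)]
    simpa using ciInf_le (hbdd' n a) 0
  have hvmono : ∀ n a, v n a ≤ v (n + 1) a := fun n a =>
    le_ciInf fun k => by simpa [add_assoc, add_comm 1 k] using ciInf_le (hbdd' n a) (1 + k)
  have hvlim : ∀ᵐ a ∂μ, Tendsto (fun n => v n a) atTop (𝓝 (s a)) :=
    hlim.mono fun a ha => tendsto_ciInf_add_of_tendsto (u := fun n => u n a) (hbdd a) ha
  have hvC : ∀ n, G.norm (v n) ≤ C := fun n => (G.norm_le_of_abs_le (hu n) (hvu n)).trans (hC n)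
  obtain ⟨hs, hnorm⟩ := hG v s (fun n => G.mem_of_abs_le (hu n) (hvu n))
    (Eventually.of_forall fun a n => ⟨hv₀ n a, hvmono n a⟩)
    hvlim ⟨C, hvC⟩
  exact ⟨hs, le_of_tendsto hnorm (Eventually.of_forall hvC)⟩

section ProductSpace

variable {E F : IdealSpace μ}

theorem mul_mem_prodSet {e f : α → ℝ} (he : e ∈ E.carrier) (hf : f ∈ F.carrier) :
    e * f ∈ prodSet E F :=
  ⟨e, he, f, hf, EventuallyEq.rfl⟩

theorem prodNorm_nonneg (z : α → ℝ) : 0 ≤ prodNorm E F z :=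
  Real.sInf_nonneg fun _ ⟨e, _, f, _, _, hr⟩ => hr ▸ mul_nonneg (E.norm_nonneg e) (F.norm_nonneg f)

theorem prodNorm_le {z e f : α → ℝ} (he : e ∈ E.carrier) (hf : f ∈ F.carrier)
    (hz : z =ᵐ[μ] e * f) : prodNorm E F z ≤ E.norm e * F.norm f :=
  csInf_le ⟨0, fun _ ⟨e', _, f', _, _, hr⟩ => hr ▸ mul_nonneg (E.norm_nonneg e') (F.norm_nonneg f')⟩
    ⟨e, he, f, hf, hz, rfl⟩

theorem zero_mem_prodSet : (0 : α → ℝ) ∈ prodSet E F := by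
  simpa using mul_mem_prodSet E.zero_mem F.zero_mem

theorem prodNorm_zero : prodNorm E F 0 = 0 :=
  le_antisymm (by simpa [E.norm_zero] using prodNorm_le E.zero_mem F.zero_mem (by simp))
    (prodNorm_nonneg 0)

theorem exists_lt_of_prodNorm_lt {z : α → ℝ} (hz : z ∈ prodSet E F) {t : ℝ}
    (ht : prodNorm E F z < t) :
    ∃ e ∈ E.carrier, ∃ f ∈ F.carrier, z =ᵐ[μ] e * f ∧ E.norm e * F.norm f < t := by
  obtain ⟨e, he, f, hf, hef⟩ := hz
  obtain ⟨_, ⟨e, he, f, hf, hef, rfl⟩, hlt⟩ :=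
    exists_lt_of_csInf_lt (s := {r | ∃ x ∈ E.carrier, ∃ y ∈ F.carrier, z =ᵐ[μ] x * y ∧
      r = E.norm x * F.norm y}) ⟨_, e, he, f, hf, hef, rfl⟩ ht
  exact ⟨e, he, f, hf, hef, hlt⟩

theorem prodNorm_smul {t : ℝ} (ht : 0 < t) (z : α → ℝ) :
    prodNorm E F (t • z) = t * prodNorm E F z := by
  rw [prodNorm, prodNorm, ← smul_eq_mul, ← Real.sInf_smul_of_nonneg ht.le]
  congr 1
  ext r
  simp only [Set.mem_ofPred_eq, Set.mem_smul_set, smul_eq_mul]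
  constructor
  · rintro ⟨e, he, f, hf, hz, rfl⟩
    refine ⟨_, ⟨t⁻¹ • e, E.smul_mem _ he, f, hf, ?_, rfl⟩, ?_⟩
    · filter_upwards [hz] with a ha
      simp only [Pi.smul_apply, Pi.mul_apply, smul_eq_mul] at ha ⊢
      rw [inv_mul_eq_div, div_mul_eq_mul_div, ← ha, mul_div_cancel_left₀ _ ht.ne']
    · rw [E.norm_smul, abs_of_pos (inv_pos.2 ht), mul_assoc, mul_inv_cancel_left₀ ht.ne']
  · rintro ⟨_, ⟨e, he, f, hf, hz, rfl⟩, rfl⟩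
    refine ⟨t • e, E.smul_mem _ he, f, hf, ?_, ?_⟩
    · filter_upwards [hz] with a ha
      simp only [Pi.smul_apply, Pi.mul_apply, smul_eq_mul] at ha ⊢
      rw [ha, mul_assoc]
    · rw [E.norm_smul, abs_of_pos ht, mul_assoc]

theorem smul_mem_prodSet (t : ℝ) {z : α → ℝ} (hz : z ∈ prodSet E F) : t • z ∈ prodSet E F := by
  obtain ⟨e, he, f, hf, hz⟩ := hz
  refine ⟨t • e, E.smul_mem t he, f, hf, ?_⟩
  filter_upwards [hz] with a ha
  simp [ha, mul_assoc]

theorem mul_div_eq_and_abs_div_le {u e f : ℝ} (h : |u| ≤ |e * f|) :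
    e * (u / e) = u ∧ |u / e| ≤ |f| := by
  rcases eq_or_ne e 0 with rfl | he
  · simp_all
  · rw [mul_div_cancel₀ _ he, abs_div, div_le_iff₀ (abs_pos.2 he), ← abs_mul, mul_comm]
    exact ⟨rfl, h⟩

/-- A function `u` dominated by `e * f` factors as `e * (u / e)` with `|u / e| ≤ |f|`; the junk
value `u / 0 = 0` is harmless, since `u = 0` wherever `e = 0`. -/
theorem mem_prodSet_and_prodNorm_le {u v : α → ℝ} (hv : v ∈ prodSet E F)
    (h : ∀ᵐ a ∂μ, |u a| ≤ |v a|) : u ∈ prodSet E F ∧ prodNorm E F u ≤ prodNorm E F v := by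
  have hfactor : ∀ e ∈ E.carrier, ∀ f ∈ F.carrier, v =ᵐ[μ] e * f →
      u =ᵐ[μ] e * (u / e) ∧ u / e ∈ F.carrier ∧ F.norm (u / e) ≤ F.norm f := by
    intro e he f hf hv
    have hdiv : ∀ᵐ a ∂μ, e a * (u a / e a) = u a ∧ |u a / e a| ≤ |f a| := by
      filter_upwards [h, hv] with a ha hva
      exact mul_div_eq_and_abs_div_le (by rwa [hva] at ha)
    have hdom : ∀ᵐ a ∂μ, |(u / e) a| ≤ |f a| := hdiv.mono fun a ha => ha.2
    exact ⟨hdiv.mono fun a ha => ha.1.symm, F.ideal_mem hf hdom, F.ideal_norm hf hdom⟩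
  obtain ⟨e, he, f, hf, hef⟩ := hv
  refine ⟨⟨e, he, _, (hfactor e he f hf hef).2.1, (hfactor e he f hf hef).1⟩, ?_⟩
  refine le_csInf ⟨_, e, he, f, hf, hef, rfl⟩ ?_
  rintro _ ⟨e, he, f, hf, hef, rfl⟩
  obtain ⟨hu, hmem, hnorm⟩ := hfactor e he f hf hef
  exact (prodNorm_le he hmem hu).trans (mul_le_mul_of_nonneg_left hnorm (E.norm_nonneg e))

/-- Rebalance a factorization with `‖e‖ ‖f‖ < s r` by reciprocal scalings of `e` and `f`. -/
theorem exists_nonneg_factors_of_prodNorm_lt {z : α → ℝ} (hz : z ∈ prodSet E F) {s r : ℝ}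
    (hr : 0 < r) (h : prodNorm E F z < s * r) :
    ∃ e ∈ E.carrier, ∃ f ∈ F.carrier, 0 ≤ e ∧ 0 ≤ f ∧ E.norm e ≤ s ∧ F.norm f ≤ r ∧
      |z| =ᵐ[μ] e * f := by
  obtain ⟨e, he, f, hf, hef, hlt⟩ := exists_lt_of_prodNorm_lt hz h
  rcases (F.norm_nonneg f).eq_or_lt with hf₀ | hf₀
  · have hs : 0 ≤ s := nonneg_of_mul_nonneg_left ((prodNorm_nonneg z).trans h.le) hr
    refine ⟨0, E.zero_mem, 0, F.zero_mem, le_rfl, le_rfl, by rwa [E.norm_zero], by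
      rw [F.norm_zero]; exact hr.le, ?_⟩
    filter_upwards [hef, (F.norm_eq_zero f hf).1 hf₀.symm] with a ha hfa
    simp [ha, hfa]
  · set k := F.norm f / r
    have hk : 0 < k := div_pos hf₀ hr
    refine ⟨k • |e|, E.smul_mem k (E.abs_mem he), k⁻¹ • |f|, F.smul_mem k⁻¹ (F.abs_mem hf),
      fun a => by simp only [Pi.zero_apply, Pi.smul_apply, Pi.abs_apply, smul_eq_mul]; positivity,
      fun a => by simp only [Pi.zero_apply, Pi.smul_apply, Pi.abs_apply, smul_eq_mul]; positivity,
      ?_, ?_, ?_⟩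
    · rw [E.norm_smul, E.norm_abs he, abs_of_pos hk, div_mul_eq_mul_div, div_le_iff₀ hr, mul_comm]
      exact hlt.le
    · rw [F.norm_smul, F.norm_abs hf, abs_of_pos (inv_pos.2 hk), inv_div, div_mul_cancel₀ _ hf₀.ne']
    · filter_upwards [hef] with a ha
      simp only [Pi.abs_apply, Pi.mul_apply, Pi.smul_apply, smul_eq_mul, ha, abs_mul]
      field_simp

end ProductSpace

theorem le_mul_of_forall_lt_le_mul {a b c : ℝ} (h : ∀ t, a < t → b ≤ c * t) : b ≤ c * a :=
  ge_of_tendsto (((continuous_const_mul c).tendsto a).mono_left nhdsWithin_le_nhds)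
    (eventually_nhdsWithin_of_forall (s := Set.Ioi a) h)

theorem le_mul_of_le_on_unitBall {V : Type*} [SMul ℝ V] {S : Set V} {N T : V → ℝ} {c : ℝ}
    (hS : ∀ t : ℝ, 0 < t → ∀ z ∈ S, t • z ∈ S) (hN₀ : ∀ z, 0 ≤ N z)
    (hN : ∀ t : ℝ, 0 < t → ∀ z, N (t • z) = t * N z)
    (hT : ∀ t : ℝ, 0 < t → ∀ z, T (t • z) = t * T z)
    (hbd : ∀ z ∈ S, N z ≤ 1 → T z ≤ c) {z : V} (hz : z ∈ S) : T z ≤ c * N z := by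
  refine le_mul_of_forall_lt_le_mul fun t ht => ?_
  have ht₀ : 0 < t := (hN₀ z).trans_lt ht
  have := hbd (t⁻¹ • z) (hS _ (inv_pos.2 ht₀) z hz)
    (by rw [hN _ (inv_pos.2 ht₀), inv_mul_le_one₀ ht₀]; exact ht.le)
  rwa [hT _ (inv_pos.2 ht₀), inv_mul_le_iff₀ ht₀, mul_comm] at this

theorem IdealSpace.norm_mul_le_mul_norm {F G : IdealSpace μ} {x : α → ℝ} {c : ℝ}
    (hbd : ∀ y ∈ F.carrier, F.norm y ≤ 1 → G.norm (x * y) ≤ c) {y : α → ℝ} (hy : y ∈ F.carrier) :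
    G.norm (x * y) ≤ c * F.norm y :=
  le_mul_of_le_on_unitBall (fun t _ y hy => F.smul_mem t hy) F.norm_nonneg
    (fun t ht y => by rw [F.norm_smul, abs_of_pos ht])
    (fun t ht y => by rw [mul_smul_comm, G.norm_smul, abs_of_pos ht]) hbd hy

theorem prodNorm_mul_le_mul_prodNorm {E F G : IdealSpace μ} {x : α → ℝ} {c : ℝ}
    (hbd : ∀ z ∈ prodSet E F, prodNorm E F z ≤ 1 → prodNorm E G (x * z) ≤ c) {z : α → ℝ}
    (hz : z ∈ prodSet E F) : prodNorm E G (x * z) ≤ c * prodNorm E F z :=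
  le_mul_of_le_on_unitBall (fun t _ z hz => smul_mem_prodSet t hz) prodNorm_nonneg
    (fun t ht z => prodNorm_smul ht z)
    (fun t ht z => by rw [mul_smul_comm, prodNorm_smul ht]) hbd hz

section Cutoff

variable {X : Type*}

noncomputable def cutoff (x y v : X → ℝ) (n : ℕ) : X → ℝ :=
  {a | |x a * y a| ≤ n * |v a|}.indicator y

theorem abs_cutoff_le (x y v : X → ℝ) (n : ℕ) : |cutoff x y v n| ≤ |y| := fun a => by
  simp only [cutoff, Set.indicator_apply, Pi.abs_apply]
  split_ifs <;> simp

theorem abs_mul_cutoff_le (x y v : X → ℝ) (n : ℕ) : |x * cutoff x y v n| ≤ |(n : ℝ) • v| :=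
  fun a => by
    simp only [cutoff, Set.indicator_apply, Pi.abs_apply, Pi.mul_apply, Pi.smul_apply]
    split_ifs with ha
    · simpa [abs_mul] using ha
    · simp only [mul_zero, abs_zero]
      positivity

theorem eventually_cutoff_eq (x y v : X → ℝ) {a : X} (ha : v a ≠ 0) :
    ∀ᶠ n in atTop, cutoff x y v n a = y a := by
  obtain ⟨N, hN⟩ := exists_nat_ge (|x a * y a| / |v a|)
  filter_upwards [eventually_ge_atTop N] with n hn
  refine Set.indicator_of_mem ?_ y
  rw [Set.mem_ofPred_eq, ← div_le_iff₀ (abs_pos.2 ha)]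
  exact hN.trans (Nat.cast_le.2 hn)

end Cutoff

theorem IdealSpace.cutoff_mem {F : IdealSpace μ} {x y v : α → ℝ} (hy : y ∈ F.carrier) (n : ℕ) :
    cutoff x y v n ∈ F.carrier :=
  F.mem_of_abs_le hy (abs_cutoff_le x y v n)

theorem IdealSpace.norm_cutoff_le {F : IdealSpace μ} {x y v : α → ℝ} (hy : y ∈ F.carrier) (n : ℕ) :
    F.norm (cutoff x y v n) ≤ F.norm y :=
  F.norm_le_of_abs_le hy (abs_cutoff_le x y v n)

theorem IdealSpace.mul_cutoff_mem {G : IdealSpace μ} {x y v : α → ℝ} (hv : v ∈ G.carrier) (n : ℕ) :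
    x * cutoff x y v n ∈ G.carrier :=
  G.mem_of_abs_le (G.smul_mem n hv) (abs_mul_cutoff_le x y v n)

/-- Where `v > 0`, the cutoffs of `x y` eventually agree with `x y`, so Fatou passes a bound on
them to `x y`. -/
theorem HasFatou.mul_mem_of_norm_mul_cutoff_le {G : IdealSpace μ} (hG : HasFatou G)
    {x y v : α → ℝ} (hv : v ∈ G.carrier) (hv₀ : ∀ᵐ a ∂μ, 0 < v a) {C : ℝ}
    (hC : ∀ n, G.norm (x * cutoff x y v n) ≤ C) : x * y ∈ G.carrier ∧ G.norm (x * y) ≤ C := by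
  have hmem : ∀ n, x * cutoff x y v n ∈ G.carrier := fun n => G.mul_cutoff_mem hv n
  have hlim : ∀ᵐ a ∂μ, Tendsto (fun n => |x * cutoff x y v n| a) atTop (𝓝 (|x * y| a)) := by
    filter_upwards [hv₀] with a ha
    refine tendsto_const_nhds.congr' ?_
    filter_upwards [eventually_cutoff_eq x y v ha.ne'] with n hn
    simp [hn]
  obtain ⟨habs, hnorm⟩ := hG.mem_and_norm_le_of_tendsto (fun n => G.abs_mem (hmem n))
    (fun n => abs_nonneg _) hlim fun n => (G.norm_abs (hmem n)).trans_le (hC n)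
  exact ⟨G.mem_of_abs_le habs (abs_abs _).ge,
    (G.norm_le_of_abs_le habs (abs_abs _).ge).trans hnorm⟩

theorem IdealSpace.nonneg_of_forall_norm_le {F G : IdealSpace μ} {x : α → ℝ} {c : ℝ}
    (hbd : ∀ y ∈ F.carrier, F.norm y ≤ 1 → G.norm (x * y) ≤ c) : 0 ≤ c := by
  simpa [G.norm_zero] using hbd 0 F.zero_mem (F.norm_zero.trans_le zero_le_one)

theorem HasFatou.mul_mem_of_forall_norm_le {F G : IdealSpace μ} (hG : HasFatou G) {x : α → ℝ}
    {c : ℝ} (hbd : ∀ y ∈ F.carrier, F.norm y ≤ 1 → G.norm (x * y) ≤ c) {y : α → ℝ}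
    (hy : y ∈ F.carrier) : x * y ∈ G.carrier ∧ G.norm (x * y) ≤ c * F.norm y := by
  have hc := F.nonneg_of_forall_norm_le hbd
  obtain ⟨v, hv, hv₀⟩ := G.weak_unit
  refine hG.mul_mem_of_norm_mul_cutoff_le hv hv₀ fun n => ?_
  calc G.norm (x * cutoff x y v n) ≤ c * F.norm (cutoff x y v n) :=
        IdealSpace.norm_mul_le_mul_norm hbd (F.cutoff_mem hy n)
    _ ≤ c * F.norm y := by gcongr; exact F.norm_cutoff_le hy n

theorem mul_mem_prodSet_of_forall_mul_mem {E F G : IdealSpace μ} {x z : α → ℝ}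
    (hx : ∀ y ∈ F.carrier, x * y ∈ G.carrier) (hz : z ∈ prodSet E F) : x * z ∈ prodSet E G := by
  obtain ⟨e, he, f, hf, hz⟩ := hz
  refine ⟨e, he, x * f, hx f hf, ?_⟩
  filter_upwards [hz] with a ha
  simp [ha, mul_left_comm]

theorem prodNorm_mul_le_of_forall_norm_mul_le {E F G : IdealSpace μ} {x z : α → ℝ} {c : ℝ}
    (hc : 0 ≤ c) (hx : ∀ y ∈ F.carrier, x * y ∈ G.carrier ∧ G.norm (x * y) ≤ c * F.norm y)
    (hz : z ∈ prodSet E F) : prodNorm E G (x * z) ≤ c * prodNorm E F z := by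
  obtain ⟨e, he, f, hf, hef⟩ := hz
  conv_rhs => rw [prodNorm, ← smul_eq_mul, ← Real.sInf_smul_of_nonneg hc]
  refine le_csInf (Set.Nonempty.smul_set ⟨_, e, he, f, hf, hef, rfl⟩) ?_
  rintro _ ⟨_, ⟨e, he, f, hf, hef, rfl⟩, rfl⟩
  have hxz : x * z =ᵐ[μ] e * (x * f) := by
    filter_upwards [hef] with a ha
    simp [ha, mul_left_comm]
  calc prodNorm E G (x * z) ≤ E.norm e * G.norm (x * f) := prodNorm_le he (hx f hf).1 hxz
    _ ≤ E.norm e * (c * F.norm f) := by gcongr; exacts [E.norm_nonneg e, (hx f hf).2]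
    _ = c • (E.norm e * F.norm f) := by rw [smul_eq_mul]; ring

theorem prod_le_mean_pow {ι : Type*} (s : Finset ι) {z : ι → ℝ} (hz : ∀ i ∈ s, 0 ≤ z i) :
    ∏ i ∈ s, z i ≤ ((s.card : ℝ)⁻¹ * ∑ i ∈ s, z i) ^ s.card := by
  rcases s.eq_empty_or_nonempty with rfl | hs
  · simp
  have hn : (s.card : ℝ) ≠ 0 := Nat.cast_ne_zero.2 hs.card_pos.ne'
  calc ∏ i ∈ s, z i = (∏ i ∈ s, z i ^ (s.card : ℝ)⁻¹) ^ s.card := by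
        rw [← Finset.prod_pow]
        exact Finset.prod_congr rfl fun i hi =>
          (Real.rpow_inv_natCast_pow (hz i hi) hs.card_pos.ne').symm
    _ ≤ (∑ i ∈ s, (s.card : ℝ)⁻¹ * z i) ^ s.card := by
        gcongr
        · exact Finset.prod_nonneg fun i hi => Real.rpow_nonneg (hz i hi) _
        · exact Real.geom_mean_le_arith_mean_weighted s _ z (fun _ _ => by positivity)
            (by simp [hn]) hz
    _ = _ := by rw [Finset.mul_sum]

/-- The conclusion says `liminf g ≥ s`: for `t < s`, `g n ≤ t` would give
`b ≤ K n ^ 2 (t / s) ^ n → 0`. -/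
theorem tendsto_min_of_pow_mul_le {s b K : ℝ} {g : ℕ → ℝ} (hb : 0 < b) (hK : 0 ≤ K)
    (hg : ∀ n, 0 ≤ g n) (h : ∀ᶠ n in atTop, s ^ n * b ≤ n ^ 2 * K * g n ^ n) :
    Tendsto (fun n => min s (g n)) atTop (𝓝 s) := by
  refine tendsto_order.2 ⟨fun t ht => ?_, fun t ht =>
    Eventually.of_forall fun n => (min_le_left _ _).trans_lt ht⟩
  rcases lt_or_ge t 0 with ht₀ | ht₀
  · exact Eventually.of_forall fun n => lt_min ht (ht₀.trans_le (hg n))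
  have hs : 0 < s := ht₀.trans_lt ht
  have hr : |t / s| < 1 := by
    rwa [abs_of_nonneg (div_nonneg ht₀ hs.le), div_lt_one hs]
  have hsmall : ∀ᶠ n : ℕ in atTop, K * ((n : ℝ) ^ 2 * (t / s) ^ n) < b := by
    have := (tendsto_pow_const_mul_const_pow_of_abs_lt_one 2 hr).const_mul K
    rw [mul_zero] at this
    exact this.eventually (gt_mem_nhds hb)
  filter_upwards [h, hsmall] with n hn hsmall
  refine lt_min ht (lt_of_not_ge fun hgt => hsmall.not_ge ?_)
  refine le_of_mul_le_mul_left ?_ (pow_pos hs n)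
  calc s ^ n * b ≤ n ^ 2 * K * g n ^ n := hn
    _ ≤ n ^ 2 * K * t ^ n := by gcongr; exact hg n
    _ = s ^ n * (K * (n ^ 2 * (t / s) ^ n)) := by rw [div_pow]; field_simp

theorem exists_seq_pow_mul_eq_mul_prod {X : Type*} {l : Filter X} {P Q : (X → ℝ) → Prop}
    {w e₀ : X → ℝ} (h₀ : P e₀) (hstep : ∀ e, P e → ∃ e', P e' ∧ ∃ g, Q g ∧ w * e =ᶠ[l] e' * g) :
    ∃ e g : ℕ → X → ℝ, (∀ n, P (e n)) ∧ (∀ n, Q (g n)) ∧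
      ∀ n, w ^ n * e₀ =ᶠ[l] e n * ∏ i ∈ Finset.range n, g i := by
  choose! next hnext g hg hfac using hstep
  have hP : ∀ n, P (next^[n] e₀) := fun n => by
    induction n with
    | zero => exact h₀
    | succ n ih => rw [Function.iterate_succ_apply']; exact hnext _ ih
  refine ⟨fun n => next^[n] e₀, fun n => g (next^[n] e₀), hP, fun n => hg _ (hP n), fun n => ?_⟩
  induction n with
  | zero => simp
  | succ n ih =>
    filter_upwards [ih, hfac _ (hP n)] with a ih hfac
    simp only [Pi.mul_apply, Pi.pow_apply, Finset.prod_apply, Finset.prod_range_succ,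
      Function.iterate_succ_apply'] at ih hfac ⊢
    linear_combination w a * ih + (∏ i ∈ Finset.range n, g (next^[i] e₀) a) * hfac

section Cancellation

variable {E F G : IdealSpace μ}

theorem exists_abs_mul_ae_eq_mul {w : α → ℝ} {c ε : ℝ} (hc : 0 ≤ c) (hε : 0 < ε)
    (hw : ∀ e ∈ E.carrier, e * w ∈ prodSet E G ∧ prodNorm E G (e * w) ≤ c * E.norm e)
    {e : α → ℝ} (he : e ∈ E.carrier) (he₀ : 0 ≤ e) (he₁ : E.norm e ≤ 1) :
    ∃ e', (e' ∈ E.carrier ∧ 0 ≤ e' ∧ E.norm e' ≤ 1) ∧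
      ∃ g, (g ∈ G.carrier ∧ 0 ≤ g ∧ G.norm g ≤ c + ε) ∧ |w| * e =ᵐ[μ] e' * g := by
  obtain ⟨hmem, hnorm⟩ := hw e he
  have hlt : prodNorm E G (e * w) < 1 * (c + ε) := by nlinarith
  obtain ⟨e', he', g, hg, he'₀, hg₀, he'₁, hg₁, hfac⟩ :=
    exists_nonneg_factors_of_prodNorm_lt hmem (by linarith) hlt
  refine ⟨e', ⟨he', he'₀, he'₁⟩, g, ⟨hg, hg₀, hg₁⟩, ?_⟩
  filter_upwards [hfac] with a ha
  simpa [abs_mul, abs_of_nonneg (he₀ a), mul_comm] using ha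

theorem HasFatou.abs_mem_and_norm_le_add (hG : HasFatou G) {w : α → ℝ} {c ε : ℝ} (hc : 0 ≤ c)
    (hε : 0 < ε) (hw : ∀ e ∈ E.carrier, e * w ∈ prodSet E G ∧ prodNorm E G (e * w) ≤ c * E.norm e) :
    |w| ∈ G.carrier ∧ G.norm |w| ≤ c + ε := by
  obtain ⟨e₀, he₀, he₀_nonneg, he₀_norm, he₀_pos⟩ := E.exists_norm_le_one_ae_pos
  obtain ⟨e, g, he, hg, hprod⟩ := exists_seq_pow_mul_eq_mul_prod (l := ae μ) (w := |w|)
    (P := fun e => e ∈ E.carrier ∧ 0 ≤ e ∧ E.norm e ≤ 1)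
    (Q := fun g => g ∈ G.carrier ∧ 0 ≤ g ∧ G.norm g ≤ c + ε) ⟨he₀, he₀_nonneg, he₀_norm⟩
    fun e ⟨he, he₀, he₁⟩ => exists_abs_mul_ae_eq_mul hc hε hw he he₀ he₁
  obtain ⟨S, hS⟩ := E.exists_le_sq_mul (fun n => (he n).1) (fun n => (he n).2.1)
    (fun n => (he n).2.2)
  set avg : ℕ → α → ℝ := fun n => (n : ℝ)⁻¹ • ∑ i ∈ Finset.range n, g i
  have havg : ∀ n, avg n ∈ G.carrier := fun n =>
    G.smul_mem _ (G.sum_mem _ fun i _ => (hg i).1)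
  have havg_nonneg : ∀ n, 0 ≤ avg n := fun n a => by
    simpa [avg] using mul_nonneg (by positivity) (Finset.sum_nonneg fun i _ => (hg i).2.1 a)
  have hlim : ∀ᵐ a ∂μ, Tendsto (fun n => (|w| ⊓ avg n) a) atTop (𝓝 (|w| a)) := by
    filter_upwards [ae_all_iff.2 hprod, hS, he₀_pos] with a hprod ⟨hS₀, hS⟩ he₀_pos
    refine tendsto_min_of_pow_mul_le he₀_pos hS₀ (fun n => havg_nonneg n a) ?_
    filter_upwards [eventually_ge_atTop 1] with n hn
    have hamgm : ∏ i ∈ Finset.range n, g i a ≤ avg n a ^ n := by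
      simpa [avg, Finset.sum_apply] using prod_le_mean_pow (Finset.range n) fun i _ => (hg i).2.1 a
    have hprod := hprod n
    simp only [Pi.mul_apply, Pi.pow_apply, Finset.prod_apply] at hprod
    rw [hprod]
    exact mul_le_mul (hS n hn) hamgm (Finset.prod_nonneg fun i _ => (hg i).2.1 a) (by positivity)
  have hu : ∀ n, |(|w| ⊓ avg n)| ≤ |avg n| := fun n a =>
    abs_le_abs_of_nonneg (le_min (abs_nonneg _) (havg_nonneg n a)) (min_le_right _ _)
  exact hG.mem_and_norm_le_of_tendsto (fun n => G.mem_of_abs_le (havg n) (hu n))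
    (fun n a => le_min (abs_nonneg _) (havg_nonneg n a)) hlim fun n =>
      (G.norm_le_of_abs_le (havg n) (hu n)).trans
        (G.norm_inv_smul_sum_le (by linarith) (fun i => (hg i).1) (fun i => (hg i).2.2) n)

theorem nonneg_of_forall_prodNorm_le {x : α → ℝ} {c : ℝ}
    (hbd : ∀ z ∈ prodSet E F, prodNorm E F z ≤ 1 → prodNorm E G (x * z) ≤ c) : 0 ≤ c := by
  simpa [prodNorm_zero] using hbd 0 zero_mem_prodSet (prodNorm_zero.trans_le zero_le_one)

/-- `M(E, E ⊙ G) ⊆ G` contractively. -/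
theorem HasFatou.mem_and_norm_le_of_forall_mul_mem_prodSet (hG : HasFatou G) {w : α → ℝ} {c : ℝ}
    (hc : 0 ≤ c)
    (hw : ∀ e ∈ E.carrier, e * w ∈ prodSet E G ∧ prodNorm E G (e * w) ≤ c * E.norm e) :
    w ∈ G.carrier ∧ G.norm w ≤ c := by
  have hmem : w ∈ G.carrier :=
    G.mem_of_abs_le (hG.abs_mem_and_norm_le_add hc one_pos hw).1 (abs_abs w).ge
  refine ⟨hmem, le_of_forall_pos_le_add fun ε hε => ?_⟩
  rw [← G.norm_abs hmem]
  exact (hG.abs_mem_and_norm_le_add hc hε hw).2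

theorem HasFatou.mul_mem_of_forall_prodNorm_le (hG : HasFatou G) {x : α → ℝ} {c : ℝ}
    (hbd : ∀ z ∈ prodSet E F, prodNorm E F z ≤ 1 → prodNorm E G (x * z) ≤ c) {y : α → ℝ}
    (hy : y ∈ F.carrier) : x * y ∈ G.carrier ∧ G.norm (x * y) ≤ c * F.norm y := by
  have hc := nonneg_of_forall_prodNorm_le hbd
  obtain ⟨v, hv, hv₀⟩ := G.weak_unit
  refine hG.mul_mem_of_norm_mul_cutoff_le hv hv₀ fun n => ?_
  have hyₙ := F.cutoff_mem (x := x) (v := v) hy n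
  refine (hG.mem_and_norm_le_of_forall_mul_mem_prodSet (E := E) (mul_nonneg hc (F.norm_nonneg y))
    fun e he => ⟨mul_mem_prodSet he (G.mul_cutoff_mem hv n), ?_⟩).2
  calc prodNorm E G (e * (x * cutoff x y v n)) = prodNorm E G (x * (e * cutoff x y v n)) := by
        rw [mul_left_comm]
    _ ≤ c * prodNorm E F (e * cutoff x y v n) :=
        prodNorm_mul_le_mul_prodNorm hbd (mul_mem_prodSet he hyₙ)
    _ ≤ c * (E.norm e * F.norm y) := by
        gcongr
        exact (prodNorm_le he hyₙ EventuallyEq.rfl).trans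
          (mul_le_mul_of_nonneg_left (F.norm_cutoff_le hy n) (E.norm_nonneg e))
    _ = c * F.norm y * E.norm e := by ring

theorem exists_factors_le_prodNorm_mul {x z : α → ℝ} (hx : x ∈ multSet (prodSet E F) (prodSet E G))
    (hz : z ∈ prodSet E F) (hz₁ : prodNorm E F z ≤ 1) {s : ℝ} (hs : 0 < s) :
    ∃ e ∈ E.carrier, ∃ f ∈ F.carrier, 0 ≤ e ∧ 0 ≤ f ∧ E.norm e ≤ 2 * s ∧ F.norm f ≤ s ∧
      s ^ 2 * prodNorm E G (x * z) ≤ prodNorm E G (x * (e * f)) := by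
  have hlt : prodNorm E F (s ^ 2 • z) < 2 * s * s := by
    rw [prodNorm_smul (by positivity)]
    nlinarith
  obtain ⟨e, he, f, hf, he₀, hf₀, hen, hfn, hef⟩ :=
    exists_nonneg_factors_of_prodNorm_lt (smul_mem_prodSet _ hz) hs hlt
  refine ⟨e, he, f, hf, he₀, hf₀, hen, hfn, ?_⟩
  rw [← prodNorm_smul (by positivity), ← mul_smul_comm]
  refine (mem_prodSet_and_prodNorm_le (hx _ (mul_mem_prodSet he hf)) ?_).2
  filter_upwards [hef] with a ha
  simp only [Pi.mul_apply, Pi.abs_apply] at ha ⊢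
  rw [abs_mul, abs_mul, ← ha, abs_abs]

/-- Multipliers `E ⊙ F → E ⊙ G` are bounded, by a gliding hump: otherwise there are
`eₙ fₙ` with `‖eₙ‖, ‖fₙ‖ ≲ 2⁻ⁿ` and `‖x eₙ fₙ‖ > n`, yet all `eₙ fₙ` lie below one `S T`. -/
theorem exists_forall_prodNorm_le_of_mem_multSet {x : α → ℝ}
    (hx : x ∈ multSet (prodSet E F) (prodSet E G)) :
    ∃ c, ∀ z ∈ prodSet E F, prodNorm E F z ≤ 1 → prodNorm E G (x * z) ≤ c := by
  by_contra! hunb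
  have hhump : ∀ n : ℕ, ∃ e ∈ E.carrier, ∃ f ∈ F.carrier, 0 ≤ e ∧ 0 ≤ f ∧
      E.norm e ≤ 2 * (1 / 2) ^ n ∧ F.norm f ≤ (1 / 2) ^ n ∧
        (n : ℝ) < prodNorm E G (x * (e * f)) := by
    intro n
    have hs : (0 : ℝ) < (1 / 2) ^ n := by positivity
    obtain ⟨z, hz, hz₁, hlt⟩ := hunb (n / ((1 / 2) ^ n) ^ 2)
    obtain ⟨e, he, f, hf, he₀, hf₀, hen, hfn, hge⟩ := exists_factors_le_prodNorm_mul hx hz hz₁ hs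
    refine ⟨e, he, f, hf, he₀, hf₀, hen, hfn, lt_of_lt_of_le ?_ hge⟩
    calc (n : ℝ) = ((1 / 2) ^ n) ^ 2 * (n / ((1 / 2) ^ n) ^ 2) := by field_simp
      _ < _ := by gcongr
  choose e he f hf he₀ hf₀ hen hfn hlt using hhump
  obtain ⟨S, hS, hSe⟩ := E.exists_forall_le_of_summable he he₀
    (Summable.of_nonneg_of_le (fun n => E.norm_nonneg _) hen (summable_geometric_two.mul_left 2))
  obtain ⟨T, hT, hTf⟩ := F.exists_forall_le_of_summable hf hf₀
    (Summable.of_nonneg_of_le (fun n => F.norm_nonneg _) hfn summable_geometric_two)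
  obtain ⟨n, hn⟩ := exists_nat_gt (prodNorm E G (x * (S * T)))
  refine (hlt n).not_ge (le_trans ?_ hn.le)
  refine (mem_prodSet_and_prodNorm_le (hx _ (mul_mem_prodSet hS hT)) ?_).2
  filter_upwards [hSe, hTf] with a hSa hTa
  simp only [Pi.mul_apply, abs_mul]
  exact mul_le_mul_of_nonneg_left (mul_le_mul (abs_le_abs_of_nonneg (he₀ n a) (hSa n))
    (abs_le_abs_of_nonneg (hf₀ n a) (hTa n)) (abs_nonneg _) (abs_nonneg _)) (abs_nonneg _)

end Cancellation

theorem sSup_eq_of_upperBounds_eq {s t : Set ℝ} (hs : s.Nonempty) (ht : t.Nonempty)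
    (h : upperBounds s = upperBounds t) : sSup s = sSup t := by
  by_cases hb : BddAbove s
  · have hlub : IsLUB t (sSup s) := by
      rw [IsLUB, ← h]
      exact isLUB_csSup hs hb
    exact (hlub.csSup_eq ht).symm
  · rw [Real.sSup_of_not_bddAbove hb, Real.sSup_of_not_bddAbove (by rwa [BddAbove, ← h])]

theorem mem_upperBounds_multNorm_iff {X : Type*} {S : Set (X → ℝ)} {N T : (X → ℝ) → ℝ}
    {x : X → ℝ} {c : ℝ} :
    c ∈ upperBounds {r | ∃ y ∈ S, N y ≤ 1 ∧ r = T (x * y)} ↔ ∀ y ∈ S, N y ≤ 1 → T (x * y) ≤ c :=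
  ⟨fun hc y hy hy₁ => hc ⟨y, hy, hy₁, rfl⟩, fun hc _ ⟨y, hy, hy₁, hr⟩ => hr ▸ hc y hy hy₁⟩

theorem multNorm_eq_of_forall_le_iff {X : Type*} {S S' : Set (X → ℝ)} {N T N' T' : (X → ℝ) → ℝ}
    {x : X → ℝ} (hS : ∃ y ∈ S, N y ≤ 1) (hS' : ∃ y ∈ S', N' y ≤ 1)
    (h : ∀ c, (∀ y ∈ S, N y ≤ 1 → T (x * y) ≤ c) ↔ ∀ y ∈ S', N' y ≤ 1 → T' (x * y) ≤ c) :
    multNorm S N T x = multNorm S' N' T' x := by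
  obtain ⟨y, hy, hy₁⟩ := hS
  obtain ⟨y', hy', hy'₁⟩ := hS'
  refine sSup_eq_of_upperBounds_eq ⟨_, y, hy, hy₁, rfl⟩ ⟨_, y', hy', hy'₁, rfl⟩
    (Set.ext fun c => ?_)
  rw [mem_upperBounds_multNorm_iff, mem_upperBounds_multNorm_iff]
  exact h c

/-- Theorem 4 (cancellation): if G has the Fatou property, then
M(E ⊙ F, E ⊙ G) ≡ M(F, G) isometrically. -/
theorem multiplier_cancellation (E F G : IdealSpace μ) (hG : HasFatou G) (x : α → ℝ) :
    (x ∈ multSet (prodSet E F) (prodSet E G) ↔ x ∈ multSet F.carrier G.carrier) ∧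
    multNorm (prodSet E F) (prodNorm E F) (prodNorm E G) x =
      multNorm F.carrier F.norm G.norm x := by
  refine ⟨⟨fun hx y hy => ?_, fun hx z hz => mul_mem_prodSet_of_forall_mul_mem hx hz⟩, ?_⟩
  · obtain ⟨c, hc⟩ := exists_forall_prodNorm_le_of_mem_multSet hx
    exact (hG.mul_mem_of_forall_prodNorm_le hc hy).1
  refine multNorm_eq_of_forall_le_iff ⟨0, zero_mem_prodSet, prodNorm_zero.trans_le zero_le_one⟩
    ⟨0, F.zero_mem, F.norm_zero.trans_le zero_le_one⟩ fun c => ⟨fun hbd y hy hy₁ => ?_,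
      fun hbd z hz hz₁ => ?_⟩
  · exact (hG.mul_mem_of_forall_prodNorm_le hbd hy).2.trans
      (mul_le_of_le_one_right (nonneg_of_forall_prodNorm_le hbd) hy₁)
  · have hc := F.nonneg_of_forall_norm_le hbd
    exact (prodNorm_mul_le_of_forall_norm_mul_le hc
      (fun y hy => hG.mul_mem_of_forall_norm_le hbd hy) hz).trans (mul_le_of_le_one_right hc hz₁)
end

section
/- Let φ₁, φ₂ be Young functions and define (φ₁ ⊕ φ₂)(u) = inf_{v>0}[φ₁(v) + φ₂(u/v)]. Then φ := φ₁ ⊕ φ₂ satisfies φ(st) ≤ √t · φ(s) for all s > 0 and 0 < t < 1. -/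
/-- The infimal convolution-type operation (φ₁ ⊕ φ₂)(u) = inf_{v>0}[φ₁(v) + φ₂(u/v)]. -/
noncomputable def oplus (φ₁ φ₂ : ℝ → ℝ) (u : ℝ) : ℝ :=
  sInf {r | ∃ v > (0 : ℝ), r = φ₁ v + φ₂ (u / v)}

lemma young_scale {φ : ℝ → ℝ} (hc : ConvexOn ℝ (Set.Ici 0) φ) (h0 : φ 0 = 0)
    {c a : ℝ} (hc0 : 0 ≤ c) (hc1 : c ≤ 1) (ha : 0 ≤ a) : φ (c * a) ≤ c * φ a := by
  have := hc.2 (Set.mem_Ici.2 ha) (Set.mem_Ici.2 le_rfl) hc0 (sub_nonneg.2 hc1) (by ring)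
  simpa [h0, smul_eq_mul] using this

/-- For Young functions φ₁, φ₂ the function φ = φ₁ ⊕ φ₂ satisfies
φ(st) ≤ √t · φ(s) for all s > 0 and 0 < t < 1. -/
theorem oplus_quasiconcavity (φ₁ φ₂ : ℝ → ℝ)
    (h₁c : ConvexOn ℝ (Set.Ici 0) φ₁) (h₂c : ConvexOn ℝ (Set.Ici 0) φ₂)
    (h₁m : MonotoneOn φ₁ (Set.Ici 0)) (h₂m : MonotoneOn φ₂ (Set.Ici 0))
    (h₁0 : φ₁ 0 = 0) (h₂0 : φ₂ 0 = 0)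
    (h₁n : ∀ u, 0 ≤ u → 0 ≤ φ₁ u) (h₂n : ∀ u, 0 ≤ u → 0 ≤ φ₂ u) :
    ∀ s > (0 : ℝ), ∀ t : ℝ, 0 < t → t < 1 →
      oplus φ₁ φ₂ (s * t) ≤ Real.sqrt t * oplus φ₁ φ₂ s := by
  intro s hs t ht ht1
  set c := Real.sqrt t with hc
  have hcpos : 0 < c := Real.sqrt_pos.2 ht
  have hc1 : c < 1 := by
    have := Real.sqrt_lt_sqrt ht.le ht1
    simpa using this
  have hcc : c * c = t := Real.mul_self_sqrt ht.le
  -- the set for s*t is bounded below by 0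
  have hbdd : BddBelow {r | ∃ v > (0 : ℝ), r = φ₁ v + φ₂ (s * t / v)} := by
    refine ⟨0, ?_⟩
    rintro r ⟨v, hv, rfl⟩
    have h1 := h₁n v hv.le
    have h2 := h₂n (s * t / v) (by positivity)
    linarith
  -- key: sInf T ≤ c * r for each element r of set S
  have key : ∀ r ∈ {r | ∃ v > (0 : ℝ), r = φ₁ v + φ₂ (s / v)},
      oplus φ₁ φ₂ (s * t) ≤ c * r := by
    rintro r ⟨v, hv, rfl⟩
    have hmem : φ₁ (c * v) + φ₂ (s * t / (c * v)) ∈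
        {r | ∃ w > (0 : ℝ), r = φ₁ w + φ₂ (s * t / w)} :=
      ⟨c * v, by positivity, rfl⟩
    have hle := csInf_le hbdd hmem
    have heq : s * t / (c * v) = c * (s / v) := by
      field_simp
      rw [← hcc]; ring
    have h1 : φ₁ (c * v) ≤ c * φ₁ v := young_scale h₁c h₁0 hcpos.le hc1.le hv.le
    have h2 : φ₂ (s * t / (c * v)) ≤ c * φ₂ (s / v) := by
      rw [heq]
      exact young_scale h₂c h₂0 hcpos.le hc1.le (by positivity)
    calc oplus φ₁ φ₂ (s * t) ≤ φ₁ (c * v) + φ₂ (s * t / (c * v)) := hle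
      _ ≤ c * (φ₁ v + φ₂ (s / v)) := by linarith
  have hne : ({r | ∃ v > (0 : ℝ), r = φ₁ v + φ₂ (s / v)}).Nonempty :=
    ⟨φ₁ 1 + φ₂ (s / 1), 1, one_pos, rfl⟩
  have hlb : oplus φ₁ φ₂ (s * t) / c ≤ oplus φ₁ φ₂ s := by
    apply le_csInf hne
    intro r hr
    have := key r hr
    rw [div_le_iff₀ hcpos]
    linarith [key r hr]
  calc oplus φ₁ φ₂ (s * t) = c * (oplus φ₁ φ₂ (s * t) / c) := by
        field_simp
    _ ≤ c * oplus φ₁ φ₂ s := by nlinarith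
end
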